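/- For each d ≥ 1 let a^{(d)}_k ∈ (0,1) (k = 1,…,d) be arbitrary, and let P_{(d)} be the matrix on E_{(d)} = {0,1}^d with p_k = 1/d, namely P_{(d)}(i, i+s_k) = a^{(d)}_k/d when i_k = 0, P_{(d)}(i, i−s_k) = (1−a^{(d)}_k)/d when i_k = 1, P_{(d)}(i,i) = 1 − Σ_{j: i_j=0} a^{(d)}_j/d − Σ_{j: i_j=1} (1−a^{(d)}_j)/d, other entries 0; let π_{(d)}(i) := ∏_{j=1}^d (a^{(d)}_j if i_j = 1, else 1−a^{(d)}_j) and sep_d(n) := sep(δ₀ P_{(d)}ⁿ, π_{(d)}). Then the sequence exhibits a separation cutoff at time d·log d with window size d: lim_{c→+∞} limsup_{d→∞} sep_d(⌈d·log d + c·d⌉) = 0 and lim_{c→+∞} liminf_{d→∞} sep_d(⌊d·log d − c·d⌋₊) = 1, where log is the natural logarithm, ⌈x⌉ is the least integer ≥ x, and ⌊x⌋₊ := max(⌊x⌋, 0). -/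

import Mathlib

open Matrix Finset Filter
open scoped Classical

/-- The hypercube `{0,1}^d`. -/
abbrev Cube (d : ℕ) : Type := Fin d → Fin 2

/-- The antidual chain of Theorem 4 on `{0,1}^d`. -/
noncomputable def cubeAntidual (d : ℕ) (p a : Fin d → ℝ) : Matrix (Cube d) (Cube d) ℝ :=
  fun i i' =>
    (∑ k : Fin d, if (i k : ℕ) = 0 ∧ (i' k : ℕ) = 1 ∧ (∀ j, j ≠ k → i' j = i j)
        then a k * p k else 0) +
    (∑ k : Fin d, if (i k : ℕ) = 1 ∧ (i' k : ℕ) = 0 ∧ (∀ j, j ≠ k → i' j = i j)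
        then (1 - a k) * p k else 0) +
    (if i' = i
        then 1 - ∑ j : Fin d, (if (i j : ℕ) = 0 then a j * p j else (1 - a j) * p j)
        else 0)

/-- The product-form stationary distribution `π(i) = ∏_j (a_j if i_j = 1 else 1 - a_j)`. -/
noncomputable def cubePi (d : ℕ) (a : Fin d → ℝ) : Cube d → ℝ :=
  fun i => ∏ j, (if (i j : ℕ) = 1 then a j else 1 - a j)

/-- Separation: `sep(μ,π) = max_e (1 - μ(e)/π(e))`. -/
noncomputable def sep {E : Type*} [Fintype E] [Nonempty E] (μ π : E → ℝ) : ℝ :=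
  Finset.univ.sup' Finset.univ_nonempty fun e => 1 - μ e / π e

/-- Separation distance at time `n` of the antidual chain (with `p_k = 1/d`)
started at `(0,…,0)`. -/
noncomputable def sepCC (a : (d : ℕ) → Fin d → ℝ) (d : ℕ) (n : ℕ) : ℝ :=
  sep ((fun i : Cube d => if i = 0 then (1 : ℝ) else 0) ᵥ*
        (cubeAntidual d (fun _ => 1 / (d : ℝ)) (a d)) ^ n)
      (cubePi d (a d))

/-- occupancy weights: `qw d n S` = P(set of seen coupons after n draws = S) -/
noncomputable def qw (d : ℕ) : ℕ → Finset (Fin d) → ℝ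
  | 0 => fun S => if S = ∅ then 1 else 0
  | n+1 => fun S => (S.card / d) * qw d n S + (1/d) * ∑ k ∈ S, qw d n (S.erase k)

lemma qw_nonneg (d n : ℕ) (S : Finset (Fin d)) : 0 ≤ qw d n S := by
  induction n generalizing S with
  | zero => simp [qw]; positivity
  | succ n ih =>
    simp only [qw]
    have h1 : (0:ℝ) ≤ (S.card / d) * qw d n S := by
      apply mul_nonneg (by positivity) (ih S)
    have h2 : (0:ℝ) ≤ ∑ k ∈ S, qw d n (S.erase k) :=
      Finset.sum_nonneg fun k _ => ih _
    positivity

/-- reindexing: sum over (S, k∈S) of g(S\k, k) = sum over (T, k∉T) of g(T,k) -/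
lemma qw_reindex (d : ℕ) (g : Finset (Fin d) → Fin d → ℝ) :
    ∑ S : Finset (Fin d), ∑ k ∈ S, g (S.erase k) k
      = ∑ T : Finset (Fin d), ∑ k ∈ Tᶜ, g T k := by
  have h1 : ∀ S : Finset (Fin d), ∑ k ∈ S, g (S.erase k) k
      = ∑ k : Fin d, if k ∈ S then g (S.erase k) k else 0 := by
    intro S; rw [Finset.sum_ite_mem]; simp [Finset.univ_inter]
  have h2 : ∀ T : Finset (Fin d), ∑ k ∈ Tᶜ, g T k
      = ∑ k : Fin d, if k ∉ T then g T k else 0 := by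
    intro T
    rw [← Finset.sum_filter]
    congr 1
    ext k
    simp
  simp only [h1, h2]
  rw [Finset.sum_comm]
  conv_rhs => rw [Finset.sum_comm]
  refine Finset.sum_congr rfl fun k _ => ?_
  -- for fixed k: ∑_S ite (k∈S) (g (S.erase k) k) 0 = ∑_T ite (k∉T) (g T k) 0
  rw [← Finset.sum_filter, ← Finset.sum_filter]
  refine Finset.sum_nbij' (fun S => S.erase k) (fun T => insert k T) ?_ ?_ ?_ ?_ ?_
  · intro S hS; simp
  · intro T hT; simp
  · intro S hS; simp at hS; exact Finset.insert_erase hS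
  · intro T hT; simp at hT; exact Finset.erase_insert hT
  · intro S hS; rfl

lemma qw_weighted (d n : ℕ) (w : Finset (Fin d) → ℝ) :
    ∑ S : Finset (Fin d), qw d (n+1) S * w S
      = ∑ S : Finset (Fin d), qw d n S *
          ((S.card / d) * w S + (1/d) * ∑ k ∈ Sᶜ, w (insert k S)) := by
  calc ∑ S : Finset (Fin d), qw d (n+1) S * w S
      = (∑ S : Finset (Fin d), qw d n S * ((S.card / d) * w S)) +
        ∑ S : Finset (Fin d), (1/(d:ℝ)) * ∑ k ∈ S, qw d n (S.erase k) * w S := by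
        rw [← Finset.sum_add_distrib]
        refine Finset.sum_congr rfl fun S _ => ?_
        simp only [qw, add_mul]
        congr 1
        · ring
        · rw [mul_assoc, Finset.sum_mul]
    _ = (∑ S : Finset (Fin d), qw d n S * ((S.card / d) * w S)) +
        ∑ S : Finset (Fin d), qw d n S * ((1/d) * ∑ k ∈ Sᶜ, w (insert k S)) := by
        congr 1
        have h := qw_reindex d (fun T k => qw d n T * w (insert k T) * (1/d))
        calc ∑ S : Finset (Fin d), (1/(d:ℝ)) * ∑ k ∈ S, qw d n (S.erase k) * w S
            = ∑ S : Finset (Fin d), ∑ k ∈ S,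
                qw d n (S.erase k) * w (insert k (S.erase k)) * (1/d) := by
              refine Finset.sum_congr rfl fun S _ => ?_
              rw [Finset.mul_sum]
              refine Finset.sum_congr rfl fun k hk => ?_
              rw [Finset.insert_erase hk]; ring
          _ = ∑ T : Finset (Fin d), ∑ k ∈ Tᶜ, qw d n T * w (insert k T) * (1/d) := h
          _ = ∑ S : Finset (Fin d), qw d n S * ((1/d) * ∑ k ∈ Sᶜ, w (insert k S)) := by
              refine Finset.sum_congr rfl fun S _ => ?_
              rw [Finset.mul_sum, Finset.mul_sum]
              refine Finset.sum_congr rfl fun k hk => ?_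
              ring
    _ = ∑ S : Finset (Fin d), qw d n S *
          ((S.card / d) * w S + (1/d) * ∑ k ∈ Sᶜ, w (insert k S)) := by
        rw [← Finset.sum_add_distrib]
        exact Finset.sum_congr rfl fun S _ => by ring

lemma card_compl_cast (d : ℕ) (S : Finset (Fin d)) :
    ((Sᶜ.card : ℕ) : ℝ) = (d:ℝ) - S.card := by
  rw [Finset.card_compl, Fintype.card_fin]
  have h1 : S.card ≤ d := by simpa using Finset.card_le_univ S
  push_cast [h1]
  ring


lemma qw_sum_one (d : ℕ) (hd : 0 < d) (n : ℕ) :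
    ∑ S : Finset (Fin d), qw d n S = 1 := by
  induction n with
  | zero => simp [qw]
  | succ n ih =>
    have h := qw_weighted d n (fun _ => 1)
    simp only [mul_one] at h
    rw [h]
    have : ∀ S : Finset (Fin d), qw d n S * ((S.card / d) + (1/d) * ∑ _k ∈ Sᶜ, (1:ℝ))
        = qw d n S := by
      intro S
      rw [Finset.sum_const, nsmul_eq_mul, mul_one, card_compl_cast d S]
      have hd' : (d:ℝ) ≠ 0 := Nat.cast_ne_zero.mpr hd.ne'
      field_simp
      ring
    rw [Finset.sum_congr rfl fun S _ => this S]
    exact ih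


lemma qw_avoid (d : ℕ) (hd : 0 < d) (A : Finset (Fin d)) (n : ℕ) :
    ∑ S : Finset (Fin d), qw d n S * (if Disjoint A S then 1 else 0)
      = (((d:ℝ) - A.card) / d) ^ n := by
  have hd' : (d:ℝ) ≠ 0 := Nat.cast_ne_zero.mpr hd.ne'
  induction n with
  | zero =>
    simp only [qw, pow_zero, ite_mul, one_mul, zero_mul]
    rw [Finset.sum_eq_single ∅] <;> simp +contextual
  | succ n ih =>
    rw [qw_weighted d n _]
    have key : ∀ S : Finset (Fin d),
        qw d n S * ((S.card / d) * (if Disjoint A S then (1:ℝ) else 0)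
          + (1/d) * ∑ j ∈ Sᶜ, (if Disjoint A (insert j S) then (1:ℝ) else 0))
        = (((d:ℝ) - A.card)/d) * (qw d n S * (if Disjoint A S then 1 else 0)) := by
      intro S
      by_cases h : Disjoint A S
      · have hA : A ⊆ Sᶜ := fun x hx => Finset.mem_compl.mpr (fun hxS => Finset.disjoint_left.mp h hx hxS)
        have h1 : ∀ j ∈ Sᶜ, (if Disjoint A (insert j S) then (1:ℝ) else 0)
            = if j ∈ A then 0 else 1 := by
          intro j _
          by_cases hj : j ∈ A
          · rw [if_pos hj, if_neg]
            intro hdisj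
            exact (Finset.disjoint_left.mp hdisj hj) (Finset.mem_insert_self j S)
          · rw [if_neg hj, if_pos]
            rw [Finset.disjoint_left]
            intro x hx hmem
            rcases Finset.mem_insert.mp hmem with rfl | hxS
            · exact hj hx
            · exact Finset.disjoint_left.mp h hx hxS
        rw [Finset.sum_congr rfl h1, Finset.sum_ite, Finset.sum_const, Finset.sum_const,
            ← Finset.sdiff_eq_filter]
        have hcard : ((Sᶜ \ A).card : ℝ) = ((d:ℝ) - S.card) - A.card := by
          rw [Finset.card_sdiff_of_subset hA, Nat.cast_sub (Finset.card_le_card hA), card_compl_cast]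
        simp only [smul_zero, zero_add, nsmul_eq_mul, mul_one, if_pos h]
        rw [hcard]
        field_simp
        ring
      · have h1 : ∀ j ∈ Sᶜ, (if Disjoint A (insert j S) then (1:ℝ) else 0) = 0 := by
          intro j _
          rw [if_neg]
          intro hdisj
          exact h (hdisj.mono_right (Finset.subset_insert j S))
        rw [Finset.sum_congr rfl h1, if_neg h]
        simp
    rw [Finset.sum_congr rfl fun S _ => key S, ← Finset.mul_sum, ih, pow_succ]
    ring

noncomputable def fac (d : ℕ) (a : Fin d → ℝ) (S : Finset (Fin d)) (k : Fin d) (x : Fin 2) : ℝ :=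
  if k ∈ S then (if (x:ℕ) = 1 then a k else 1 - a k) else (if (x:ℕ) = 0 then 1 else 0)

noncomputable def bw (d : ℕ) (a : Fin d → ℝ) (S : Finset (Fin d)) (i : Cube d) : ℝ :=
  ∏ k, fac d a S k (i k)

lemma bw_eq (d : ℕ) (a : Fin d → ℝ) (S : Finset (Fin d)) (i : Cube d) (k : Fin d) :
    bw d a S i = fac d a S k (i k) * ∏ j ∈ Finset.univ.erase k, fac d a S j (i j) :=
  (Finset.mul_prod_erase Finset.univ _ (Finset.mem_univ k)).symm

lemma bw_update (d : ℕ) (a : Fin d → ℝ) (S : Finset (Fin d)) (i : Cube d) (k : Fin d)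
    (x : Fin 2) :
    bw d a S (Function.update i k x)
      = fac d a S k x * ∏ j ∈ Finset.univ.erase k, fac d a S j (i j) := by
  rw [bw, ← Finset.mul_prod_erase Finset.univ _ (Finset.mem_univ k), Function.update_self]
  congr 1
  exact Finset.prod_congr rfl fun j hj => by
    rw [Function.update_of_ne (Finset.mem_erase.mp hj).1]

lemma bw_insert (d : ℕ) (a : Fin d → ℝ) (S : Finset (Fin d)) (i : Cube d) (k : Fin d) :
    bw d a (insert k S) i
      = (if ((i k):ℕ) = 1 then a k else 1 - a k) *
          ∏ j ∈ Finset.univ.erase k, fac d a S j (i j) := by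
  rw [bw, ← Finset.mul_prod_erase Finset.univ _ (Finset.mem_univ k)]
  congr 1
  · simp [fac]
  · exact Finset.prod_congr rfl fun j hj => by
      simp only [fac, Finset.mem_insert, (Finset.mem_erase.mp hj).1, false_or]

lemma collapse (d : ℕ) (f : Cube d → ℝ) (k : Fin d) (i' : Cube d) (u v : Fin 2) :
    (∑ i : Cube d, if ((i k : ℕ) = (u:ℕ) ∧ (i' k : ℕ) = (v:ℕ) ∧ ∀ j, j ≠ k → i' j = i j)
        then f i else 0)
      = if (i' k : ℕ) = (v:ℕ) then f (Function.update i' k u) else 0 := by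
  have hcond : ∀ i : Cube d,
      ((i k : ℕ) = (u:ℕ) ∧ (i' k : ℕ) = (v:ℕ) ∧ ∀ j, j ≠ k → i' j = i j)
        ↔ ((i' k : ℕ) = (v:ℕ) ∧ i = Function.update i' k u) := by
    intro i
    constructor
    · rintro ⟨h1, h2, h3⟩
      refine ⟨h2, funext fun j => ?_⟩
      by_cases hj : j = k
      · subst hj; rw [Function.update_self]; exact Fin.ext h1
      · rw [Function.update_of_ne hj]; exact (h3 j hj).symm
    · rintro ⟨h2, rfl⟩
      refine ⟨by rw [Function.update_self], h2, fun j hj => ?_⟩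
      rw [Function.update_of_ne hj]
  simp only [hcond]
  by_cases h : (i' k : ℕ) = (v:ℕ)
  · simp only [h, true_and, if_true]
    rw [Finset.sum_ite_eq' Finset.univ (Function.update i' k u) f]
    simp
  · simp [h]

lemma fin_two_cases (x : Fin 2) : x = 0 ∨ x = 1 := by omega

lemma perk (d : ℕ) (a : Fin d → ℝ) (S : Finset (Fin d)) (k : Fin d) (x : Fin 2) (g : ℝ) :
    (if ((x:ℕ) = 1) then (fac d a S k 0 * g) * (a k * (1/d)) else 0)
    + (if ((x:ℕ) = 0) then (fac d a S k 1 * g) * ((1 - a k) * (1/d)) else 0)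
    + ((1/d) * (fac d a S k x * g)
        - fac d a S k x * g * (if (x:ℕ) = 0 then a k * (1/d) else (1 - a k) * (1/d)))
    = (if k ∈ S then (1/(d:ℝ)) * (fac d a S k x * g) else 0)
      + (if k ∈ S then 0 else (1/d) * ((if (x:ℕ) = 1 then a k else 1 - a k) * g)) := by
  rcases fin_two_cases x with rfl | rfl <;>
    by_cases hk : k ∈ S <;>
    simp [fac, hk] <;> ring

lemma bw_vecMul (d : ℕ) (hd : 0 < d) (a : Fin d → ℝ) (S : Finset (Fin d)) (i' : Cube d) :
    ∑ i : Cube d, bw d a S i * cubeAntidual d (fun _ => 1/(d:ℝ)) a i i'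
      = (S.card / d) * bw d a S i' + (1/d) * ∑ k ∈ Sᶜ, bw d a (insert k S) i' := by
  classical
  have hd' : (d:ℝ) ≠ 0 := Nat.cast_ne_zero.mpr hd.ne'
  set E : Fin d → ℝ := fun k =>
    (if ((i' k : ℕ) = 1) then bw d a S (Function.update i' k 0) * (a k * (1/d)) else 0)
    + (if ((i' k : ℕ) = 0) then bw d a S (Function.update i' k 1) * ((1 - a k) * (1/d)) else 0)
    + ((1/d) * bw d a S i'
        - bw d a S i' * (if (i' k : ℕ) = 0 then a k * (1/d) else (1 - a k) * (1/d)))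
    with hE
  have hL : ∑ i : Cube d, bw d a S i * cubeAntidual d (fun _ => 1/(d:ℝ)) a i i'
      = ∑ k : Fin d, E k := by
    calc ∑ i : Cube d, bw d a S i * cubeAntidual d (fun _ => 1/(d:ℝ)) a i i'
        = ∑ i : Cube d,
            ((∑ k : Fin d, if (i k : ℕ) = 0 ∧ (i' k : ℕ) = 1 ∧ (∀ j, j ≠ k → i' j = i j)
                then bw d a S i * (a k * (1/d)) else 0)
            + (∑ k : Fin d, if (i k : ℕ) = 1 ∧ (i' k : ℕ) = 0 ∧ (∀ j, j ≠ k → i' j = i j)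
                then bw d a S i * ((1 - a k) * (1/d)) else 0)
            + (if i' = i then bw d a S i *
                (1 - ∑ j : Fin d, (if (i j : ℕ) = 0 then a j * (1/(d:ℝ)) else (1 - a j) * (1/d)))
                else 0)) := by
          refine Finset.sum_congr rfl fun i _ => ?_
          simp only [cubeAntidual, mul_add, Finset.mul_sum, mul_ite, mul_zero]
      _ = (∑ k : Fin d, ∑ i : Cube d,
              if (i k : ℕ) = 0 ∧ (i' k : ℕ) = 1 ∧ (∀ j, j ≠ k → i' j = i j)
                then bw d a S i * (a k * (1/d)) else 0)
          + (∑ k : Fin d, ∑ i : Cube d,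
              if (i k : ℕ) = 1 ∧ (i' k : ℕ) = 0 ∧ (∀ j, j ≠ k → i' j = i j)
                then bw d a S i * ((1 - a k) * (1/d)) else 0)
          + ∑ i : Cube d, (if i' = i then bw d a S i *
                (1 - ∑ j : Fin d, (if (i j : ℕ) = 0 then a j * (1/(d:ℝ)) else (1 - a j) * (1/d)))
                else 0) := by
          rw [Finset.sum_add_distrib, Finset.sum_add_distrib]
          congr 1
          congr 1
          · exact Finset.sum_comm
          · exact Finset.sum_comm
      _ = (∑ k : Fin d, if (i' k : ℕ) = 1
              then bw d a S (Function.update i' k 0) * (a k * (1/d)) else 0)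
          + (∑ k : Fin d, if (i' k : ℕ) = 0
              then bw d a S (Function.update i' k 1) * ((1 - a k) * (1/d)) else 0)
          + bw d a S i' *
              (1 - ∑ j : Fin d, (if (i' j : ℕ) = 0 then a j * (1/(d:ℝ)) else (1 - a j) * (1/d))) := by
          congr 1
          congr 1
          · refine Finset.sum_congr rfl fun k _ => ?_
            simpa using collapse d (fun i => bw d a S i * (a k * (1/d))) k i' 0 1
          · refine Finset.sum_congr rfl fun k _ => ?_
            simpa using collapse d (fun i => bw d a S i * ((1 - a k) * (1/d))) k i' 1 0
          · rw [Finset.sum_ite_eq]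
            simp
      _ = ∑ k : Fin d, E k := by
          have h3 : bw d a S i' *
              (1 - ∑ j : Fin d, (if (i' j : ℕ) = 0 then a j * (1/(d:ℝ)) else (1 - a j) * (1/d)))
              = ∑ k : Fin d, ((1/(d:ℝ)) * bw d a S i'
                  - bw d a S i' * (if (i' k : ℕ) = 0 then a k * (1/d) else (1 - a k) * (1/d))) := by
            rw [Finset.sum_sub_distrib, Finset.sum_const, Finset.card_univ, Fintype.card_fin,
              nsmul_eq_mul, ← Finset.mul_sum]
            field_simp
          rw [h3, ← Finset.sum_add_distrib, ← Finset.sum_add_distrib]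
  have hR : (S.card / (d:ℝ)) * bw d a S i' + (1/d) * ∑ k ∈ Sᶜ, bw d a (insert k S) i'
      = ∑ k : Fin d, E k := by
    have h1 : (S.card / (d:ℝ)) * bw d a S i'
        = ∑ k : Fin d, (if k ∈ S then (1/(d:ℝ)) * bw d a S i' else 0) := by
      rw [Finset.sum_ite_mem, Finset.univ_inter, Finset.sum_const, nsmul_eq_mul]
      ring
    have h2 : (1/(d:ℝ)) * ∑ k ∈ Sᶜ, bw d a (insert k S) i'
        = ∑ k : Fin d, (if k ∈ S then 0 else (1/d) * bw d a (insert k S) i') := by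
      rw [Finset.mul_sum]
      symm
      rw [Finset.sum_ite, Finset.sum_const_zero, zero_add]
      congr 1
      ext k
      simp
    rw [h1, h2, ← Finset.sum_add_distrib]
    refine Finset.sum_congr rfl fun k _ => ?_
    show _ = E k
    rw [hE]
    simp only []
    rw [bw_update d a S i' k 0, bw_update d a S i' k 1, bw_insert, bw_eq d a S i' k]
    exact (perk d a S k (i' k) _).symm
  rw [hL, hR]

lemma bw_empty (d : ℕ) (a : Fin d → ℝ) (i : Cube d) :
    bw d a ∅ i = if i = 0 then 1 else 0 := by
  by_cases h : i = 0
  · subst h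
    rw [if_pos rfl, bw]
    refine Finset.prod_eq_one fun k _ => ?_
    simp [fac]
  · rw [if_neg h, bw]
    obtain ⟨k, hk⟩ : ∃ k, i k ≠ 0 := by
      by_contra hc
      push_neg at hc
      exact h (funext fun k => hc k)
    refine Finset.prod_eq_zero (Finset.mem_univ k) ?_
    have : (i k : ℕ) ≠ 0 := fun hv => hk (Fin.ext hv)
    simp [fac, this]

lemma mu_eq (d : ℕ) (hd : 0 < d) (a : Fin d → ℝ) (n : ℕ) :
    (fun i : Cube d => if i = 0 then (1:ℝ) else 0) ᵥ*
        (cubeAntidual d (fun _ => 1/(d:ℝ)) a) ^ n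
      = fun i => ∑ S : Finset (Fin d), qw d n S * bw d a S i := by
  induction n with
  | zero =>
    rw [pow_zero, Matrix.vecMul_one]
    funext i
    rw [Finset.sum_eq_single ∅]
    · simp [qw, bw_empty]
    · intro S _ hS
      simp [qw, hS]
    · simp
  | succ n ih =>
    rw [pow_succ, ← Matrix.vecMul_vecMul, ih]
    funext i'
    show ∑ i : Cube d, (∑ S : Finset (Fin d), qw d n S * bw d a S i) *
        cubeAntidual d (fun _ => 1/(d:ℝ)) a i i' = _
    calc ∑ i : Cube d, (∑ S : Finset (Fin d), qw d n S * bw d a S i) *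
          cubeAntidual d (fun _ => 1/(d:ℝ)) a i i'
        = ∑ S : Finset (Fin d), qw d n S *
            ∑ i : Cube d, bw d a S i * cubeAntidual d (fun _ => 1/(d:ℝ)) a i i' := by
          simp only [Finset.sum_mul, Finset.mul_sum]
          rw [Finset.sum_comm]
          exact Finset.sum_congr rfl fun S _ => Finset.sum_congr rfl fun i _ => by ring
      _ = ∑ S : Finset (Fin d), qw d n S *
            ((S.card / d) * bw d a S i' + (1/d) * ∑ k ∈ Sᶜ, bw d a (insert k S) i') := by
          refine Finset.sum_congr rfl fun S _ => ?_
          rw [bw_vecMul d hd a S i']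
      _ = ∑ S : Finset (Fin d), qw d (n+1) S * bw d a S i' :=
          (qw_weighted d n (fun S => bw d a S i')).symm
  

lemma fac_nonneg (d : ℕ) (a : Fin d → ℝ) (ha : ∀ k, 0 < a k ∧ a k < 1)
    (S : Finset (Fin d)) (k : Fin d) (x : Fin 2) : 0 ≤ fac d a S k x := by
  rw [fac]
  rcases ha k with ⟨h1, h2⟩
  split_ifs <;> linarith

lemma bw_nonneg (d : ℕ) (a : Fin d → ℝ) (ha : ∀ k, 0 < a k ∧ a k < 1)
    (S : Finset (Fin d)) (i : Cube d) : 0 ≤ bw d a S i :=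
  Finset.prod_nonneg fun k _ => fac_nonneg d a ha S k (i k)

lemma bw_univ (d : ℕ) (a : Fin d → ℝ) (i : Cube d) :
    bw d a Finset.univ i = cubePi d a i := by
  rw [bw, cubePi]
  exact Finset.prod_congr rfl fun k _ => by simp [fac]

lemma cubePi_pos (d : ℕ) (a : Fin d → ℝ) (ha : ∀ k, 0 < a k ∧ a k < 1) (i : Cube d) :
    0 < cubePi d a i := by
  rw [cubePi]
  refine Finset.prod_pos fun k _ => ?_
  rcases ha k with ⟨h1, h2⟩
  split_ifs <;> linarith

lemma bw_ones (d : ℕ) (a : Fin d → ℝ) (S : Finset (Fin d)) (hS : S ≠ Finset.univ) :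
    bw d a S (fun _ => 1) = 0 := by
  obtain ⟨k, hk⟩ : ∃ k, k ∉ S := by
    by_contra hc
    push_neg at hc
    exact hS (Finset.eq_univ_iff_forall.mpr hc)
  exact Finset.prod_eq_zero (Finset.mem_univ k) (by simp [fac, hk])

lemma sep_formula (a : (d : ℕ) → Fin d → ℝ) (ha : ∀ d k, 0 < a d k ∧ a d k < 1)
    (d : ℕ) (hd : 0 < d) (n : ℕ) :
    sepCC a d n = 1 - qw d n Finset.univ := by
  rw [sepCC, sep, mu_eq d hd (a d) n]
  set μ : Cube d → ℝ := fun i => ∑ S : Finset (Fin d), qw d n S * bw d (a d) S i with hμ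
  have hub : ∀ i : Cube d, 1 - μ i / cubePi d (a d) i ≤ 1 - qw d n Finset.univ := by
    intro i
    have hπ := cubePi_pos d (a d) (ha d) i
    have hμi : qw d n Finset.univ * cubePi d (a d) i ≤ μ i := by
      rw [← bw_univ d (a d) i]
      exact Finset.single_le_sum
        (f := fun S : Finset (Fin d) => qw d n S * bw d (a d) S i)
        (fun S _ => mul_nonneg (qw_nonneg d n S) (bw_nonneg d (a d) (ha d) S i))
        (Finset.mem_univ Finset.univ)
    have : qw d n Finset.univ ≤ μ i / cubePi d (a d) i :=
      (le_div_iff₀ hπ).mpr hμi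
    linarith
  have hones : μ (fun _ => 1) = qw d n Finset.univ * cubePi d (a d) (fun _ => 1) := by
    show (∑ S : Finset (Fin d), qw d n S * bw d (a d) S (fun _ => 1)) = _
    rw [Finset.sum_eq_single Finset.univ]
    · rw [bw_univ]
    · intro S _ hS
      rw [bw_ones d (a d) S hS, mul_zero]
    · simp
  have hval : 1 - μ (fun _ => 1) / cubePi d (a d) (fun _ => 1) = 1 - qw d n Finset.univ := by
    rw [hones, mul_div_assoc, div_self (cubePi_pos d (a d) (ha d) _).ne', mul_one]
  apply le_antisymm
  · exact Finset.sup'_le _ _ fun i _ => hub i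
  · rw [← hval]
    exact Finset.le_sup' (fun e => 1 - μ e / cubePi d (a d) e) (Finset.mem_univ _)

lemma qw_univ_le_one (d : ℕ) (hd : 0 < d) (n : ℕ) : qw d n Finset.univ ≤ 1 := by
  rw [← qw_sum_one d hd n]
  exact Finset.single_le_sum (fun S _ => qw_nonneg d n S) (Finset.mem_univ _)

lemma Ncard_eq (d : ℕ) (S : Finset (Fin d)) :
    ((Sᶜ.card : ℕ) : ℝ) = ∑ k : Fin d, (if Disjoint {k} S then (1:ℝ) else 0) := by
  have h : ∀ k, (if Disjoint {k} S then (1:ℝ) else 0) = if k ∈ Sᶜ then 1 else 0 := by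
    intro k; simp [Finset.disjoint_singleton_left]
  rw [Finset.sum_congr rfl fun k _ => h k, Finset.sum_ite_mem, Finset.univ_inter,
    Finset.sum_const, nsmul_eq_mul, mul_one]

lemma qw_E1 (d : ℕ) (hd : 0 < d) (n : ℕ) :
    ∑ S : Finset (Fin d), qw d n S * ((Sᶜ.card : ℕ) : ℝ)
      = d * (((d:ℝ) - 1) / d) ^ n := by
  calc ∑ S : Finset (Fin d), qw d n S * ((Sᶜ.card : ℕ) : ℝ)
      = ∑ S : Finset (Fin d), ∑ k : Fin d,
          qw d n S * (if Disjoint {k} S then (1:ℝ) else 0) := by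
        refine Finset.sum_congr rfl fun S _ => ?_
        rw [Ncard_eq, Finset.mul_sum]
    _ = ∑ k : Fin d, ∑ S : Finset (Fin d),
          qw d n S * (if Disjoint {k} S then (1:ℝ) else 0) := Finset.sum_comm
    _ = ∑ k : Fin d, (((d:ℝ) - 1) / d) ^ n := by
        refine Finset.sum_congr rfl fun k _ => ?_
        have := qw_avoid d hd {k} n
        simpa using this
    _ = d * (((d:ℝ) - 1) / d) ^ n := by
        rw [Finset.sum_const, Finset.card_univ, Fintype.card_fin, nsmul_eq_mul]

lemma Nsq_eq (d : ℕ) (S : Finset (Fin d)) :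
    ((Sᶜ.card : ℕ) : ℝ)^2 = ((Sᶜ.card : ℕ) : ℝ)
      + ∑ p ∈ Finset.univ.offDiag (α := Fin d),
          (if Disjoint {p.1, p.2} S then (1:ℝ) else 0) := by
  have hdisj : ∀ p : Fin d × Fin d,
      (Disjoint {p.1, p.2} S) ↔ (p.1 ∈ Sᶜ ∧ p.2 ∈ Sᶜ) := by
    intro p
    rw [Finset.insert_eq, Finset.disjoint_union_left, Finset.disjoint_singleton_left,
      Finset.disjoint_singleton_left, Finset.mem_compl, Finset.mem_compl]
  have h1 : ∑ p ∈ Finset.univ.offDiag (α := Fin d),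
      (if Disjoint {p.1, p.2} S then (1:ℝ) else 0)
      = (Sᶜ.offDiag.card : ℕ) := by
    rw [Finset.sum_ite, Finset.sum_const, Finset.sum_const, smul_zero, add_zero,
      nsmul_eq_mul, mul_one]
    congr 1
    congr 1
    ext p
    simp only [Finset.mem_filter, Finset.mem_offDiag, Finset.mem_univ, true_and, hdisj,
      Finset.mem_compl]
    tauto
  rw [h1, Finset.offDiag_card]
  have hle : Sᶜ.card ≤ Sᶜ.card * Sᶜ.card := by
    rcases Nat.eq_zero_or_pos Sᶜ.card with h|h
    · simp [h]
    · exact Nat.le_mul_of_pos_left _ h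
  push_cast [hle]
  ring

lemma qw_E2 (d : ℕ) (hd2 : 2 ≤ d) (n : ℕ) :
    ∑ S : Finset (Fin d), qw d n S * ((Sᶜ.card : ℕ) : ℝ)^2
      ≤ d * (((d:ℝ) - 1) / d) ^ n + (d * (((d:ℝ) - 1) / d) ^ n)^2 := by
  have hd : 0 < d := by omega
  have hd' : (0:ℝ) < d := by exact_mod_cast hd
  have key : ∑ S : Finset (Fin d), qw d n S * ((Sᶜ.card : ℕ) : ℝ)^2
      = d * (((d:ℝ) - 1) / d) ^ n
        + ((Finset.univ.offDiag (α := Fin d)).card : ℝ) * (((d:ℝ) - 2) / d) ^ n := by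
    calc ∑ S : Finset (Fin d), qw d n S * ((Sᶜ.card : ℕ) : ℝ)^2
        = ∑ S : Finset (Fin d), (qw d n S * ((Sᶜ.card : ℕ) : ℝ)
            + ∑ p ∈ Finset.univ.offDiag (α := Fin d),
                qw d n S * (if Disjoint {p.1, p.2} S then (1:ℝ) else 0)) := by
          refine Finset.sum_congr rfl fun S _ => ?_
          rw [Nsq_eq, mul_add, Finset.mul_sum]
      _ = d * (((d:ℝ) - 1) / d) ^ n
            + ∑ p ∈ Finset.univ.offDiag (α := Fin d), ∑ S : Finset (Fin d),
                qw d n S * (if Disjoint {p.1, p.2} S then (1:ℝ) else 0) := by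
          rw [Finset.sum_add_distrib, qw_E1 d hd n, Finset.sum_comm]
      _ = d * (((d:ℝ) - 1) / d) ^ n
            + ∑ p ∈ Finset.univ.offDiag (α := Fin d), (((d:ℝ) - 2) / d) ^ n := by
          congr 1
          refine Finset.sum_congr rfl fun p hp => ?_
          have hne : p.1 ≠ p.2 := (Finset.mem_offDiag.mp hp).2.2
          have hcard : ({p.1, p.2} : Finset (Fin d)).card = 2 :=
            Finset.card_pair hne
          have := qw_avoid d hd {p.1, p.2} n
          rw [hcard] at this
          rw [this]
          norm_num
      _ = _ := by rw [Finset.sum_const, nsmul_eq_mul]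
  rw [key]
  have hcard : ((Finset.univ.offDiag (α := Fin d)).card : ℝ) ≤ (d:ℝ)^2 := by
    rw [Finset.offDiag_card, Finset.card_univ, Fintype.card_fin]
    calc ((d * d - d : ℕ) : ℝ) ≤ ((d * d : ℕ) : ℝ) := by exact_mod_cast Nat.sub_le _ _
      _ = (d:ℝ)^2 := by push_cast; ring
  have hbase : (((d:ℝ) - 2) / d) ^ n ≤ ((((d:ℝ) - 1) / d) ^ 2) ^ n := by
    apply pow_le_pow_left₀
    · apply div_nonneg _ hd'.le
      have : (2:ℝ) ≤ d := by exact_mod_cast hd2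
      linarith
    · rw [div_pow, div_le_div_iff₀ hd' (by positivity)]
      have : (2:ℝ) ≤ d := by exact_mod_cast hd2
      nlinarith
  have h2 : ((Finset.univ.offDiag (α := Fin d)).card : ℝ) * (((d:ℝ) - 2) / d) ^ n
      ≤ (d * (((d:ℝ) - 1) / d) ^ n)^2 := by
    have hnn : (0:ℝ) ≤ (((d:ℝ) - 2) / d) ^ n := by
      apply pow_nonneg
      apply div_nonneg _ hd'.le
      have : (2:ℝ) ≤ d := by exact_mod_cast hd2
      linarith
    calc ((Finset.univ.offDiag (α := Fin d)).card : ℝ) * (((d:ℝ) - 2) / d) ^ n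
        ≤ (d:ℝ)^2 * ((((d:ℝ) - 1) / d) ^ 2) ^ n := by
          apply mul_le_mul hcard hbase hnn (by positivity)
      _ = (d * (((d:ℝ) - 1) / d) ^ n)^2 := by
          rw [mul_pow, ← pow_mul, ← pow_mul, mul_comm 2 n]
  linarith

lemma sep_upper (d : ℕ) (hd : 0 < d) (n : ℕ) :
    1 - qw d n Finset.univ ≤ d * (((d:ℝ) - 1) / d) ^ n := by
  have h1 : 1 - qw d n Finset.univ
      = ∑ S : Finset (Fin d), qw d n S * (if S = Finset.univ then 0 else 1) := by
    have : ∑ S : Finset (Fin d), qw d n S * (if S = Finset.univ then (0:ℝ) else 1)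
        = (∑ S : Finset (Fin d), qw d n S)
          - ∑ S : Finset (Fin d), (if S = Finset.univ then qw d n S else 0) := by
      rw [← Finset.sum_sub_distrib]
      refine Finset.sum_congr rfl fun S _ => ?_
      split_ifs <;> ring
    rw [this, qw_sum_one d hd n, Finset.sum_ite_eq' Finset.univ Finset.univ (qw d n)]
    simp
  rw [h1, ← qw_E1 d hd n]
  refine Finset.sum_le_sum fun S _ => ?_
  by_cases hS : S = Finset.univ
  · simp [hS]
  · rw [if_neg hS, mul_one]
    have h2 : (1:ℝ) ≤ ((Sᶜ.card : ℕ) : ℝ) := by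
      have hne : Sᶜ.Nonempty := by
        rw [Finset.nonempty_iff_ne_empty]
        intro hc
        exact hS (by simpa [Finset.compl_eq_empty_iff] using hc)
      have := Finset.card_pos.mpr hne
      exact_mod_cast this
    nlinarith [qw_nonneg d n S]

lemma sep_lower (d : ℕ) (hd2 : 2 ≤ d) (n : ℕ) :
    d * (((d:ℝ) - 1) / d) ^ n / (1 + d * (((d:ℝ) - 1) / d) ^ n)
      ≤ 1 - qw d n Finset.univ := by
  have hd : 0 < d := by omega
  have hd' : (0:ℝ) < d := by exact_mod_cast hd
  set e1 : ℝ := d * (((d:ℝ) - 1) / d) ^ n with he1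
  have he1pos : 0 < e1 := by
    rw [he1]
    apply mul_pos hd'
    apply pow_pos
    apply div_pos _ hd'
    have : (2:ℝ) ≤ d := by exact_mod_cast hd2
    linarith
  set e2 : ℝ := ∑ S : Finset (Fin d), qw d n S * ((Sᶜ.card : ℕ) : ℝ)^2 with he2
  have hCS : e1^2 ≤ (1 - qw d n Finset.univ) * e2 := by
    have := Finset.sum_mul_sq_le_sq_mul_sq Finset.univ
      (fun S : Finset (Fin d) => Real.sqrt (qw d n S) * (if S = Finset.univ then 0 else 1))
      (fun S : Finset (Fin d) => Real.sqrt (qw d n S) * ((Sᶜ.card : ℕ) : ℝ))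
    have hfg : ∀ S : Finset (Fin d),
        (Real.sqrt (qw d n S) * (if S = Finset.univ then (0:ℝ) else 1))
          * (Real.sqrt (qw d n S) * ((Sᶜ.card : ℕ) : ℝ))
        = qw d n S * ((Sᶜ.card : ℕ) : ℝ) := by
      intro S
      by_cases hS : S = Finset.univ
      · simp [hS]
      · rw [if_neg hS]
        rw [show Real.sqrt (qw d n S) * 1 * (Real.sqrt (qw d n S) * ((Sᶜ.card : ℕ) : ℝ))
            = (Real.sqrt (qw d n S) * Real.sqrt (qw d n S)) * ((Sᶜ.card : ℕ) : ℝ) by ring,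
          Real.mul_self_sqrt (qw_nonneg d n S)]
    have hf2 : ∀ S : Finset (Fin d),
        (Real.sqrt (qw d n S) * (if S = Finset.univ then (0:ℝ) else 1))^2
        = qw d n S * (if S = Finset.univ then 0 else 1) := by
      intro S
      rw [mul_pow, Real.sq_sqrt (qw_nonneg d n S)]
      by_cases hS : S = Finset.univ <;> simp [hS]
    have hg2 : ∀ S : Finset (Fin d),
        (Real.sqrt (qw d n S) * ((Sᶜ.card : ℕ) : ℝ))^2
        = qw d n S * ((Sᶜ.card : ℕ) : ℝ)^2 := by
      intro S
      rw [mul_pow, Real.sq_sqrt (qw_nonneg d n S)]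
    rw [Finset.sum_congr rfl fun S _ => hfg S] at this
    rw [Finset.sum_congr rfl fun S _ => hf2 S] at this
    rw [Finset.sum_congr rfl fun S _ => hg2 S] at this
    rw [qw_E1 d hd n] at this
    have hsum : ∑ S : Finset (Fin d), qw d n S * (if S = Finset.univ then (0:ℝ) else 1)
        = 1 - qw d n Finset.univ := by
      have : ∑ S : Finset (Fin d), qw d n S * (if S = Finset.univ then (0:ℝ) else 1)
          = (∑ S : Finset (Fin d), qw d n S)
            - ∑ S : Finset (Fin d), (if S = Finset.univ then qw d n S else 0) := by
        rw [← Finset.sum_sub_distrib]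
        refine Finset.sum_congr rfl fun S _ => ?_
        split_ifs <;> ring
      rw [this, qw_sum_one d hd n, Finset.sum_ite_eq' Finset.univ Finset.univ (qw d n)]
      simp
    rw [hsum] at this
    exact this
  have he2le : e2 ≤ e1 + e1^2 := qw_E2 d hd2 n
  have hq1 : qw d n Finset.univ ≤ 1 := qw_univ_le_one d hd n
  rw [div_le_iff₀ (by positivity)]
  nlinarith [he1pos, hCS, he2le, hq1]

lemma sepCC_nonneg (a : (d : ℕ) → Fin d → ℝ) (ha : ∀ d k, 0 < a d k ∧ a d k < 1)
    (d : ℕ) (hd : 0 < d) (n : ℕ) : 0 ≤ sepCC a d n := by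
  rw [sep_formula a ha d hd]
  linarith [qw_univ_le_one d hd n]

lemma sepCC_le_one (a : (d : ℕ) → Fin d → ℝ) (ha : ∀ d k, 0 < a d k ∧ a d k < 1)
    (d : ℕ) (hd : 0 < d) (n : ℕ) : sepCC a d n ≤ 1 := by
  rw [sep_formula a ha d hd]
  linarith [qw_nonneg d n (Finset.univ : Finset (Fin d))]

lemma upper_est (a : (d : ℕ) → Fin d → ℝ) (ha : ∀ d k, 0 < a d k ∧ a d k < 1)
    (c : ℝ) (d : ℕ) (hd : 1 ≤ d) :
    sepCC a d ⌈(d : ℝ) * Real.log d + c * d⌉₊ ≤ Real.exp (-c) := by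
  have hd0 : 0 < d := hd
  have hd' : (0:ℝ) < d := by exact_mod_cast hd0
  rw [sep_formula a ha d hd0]
  refine le_trans (sep_upper d hd0 _) ?_
  set n := ⌈(d : ℝ) * Real.log d + c * d⌉₊ with hn
  have hbase0 : (0:ℝ) ≤ ((d:ℝ) - 1) / d := by
    apply div_nonneg _ hd'.le
    have : (1:ℝ) ≤ d := by exact_mod_cast hd
    linarith
  have hbase : ((d:ℝ) - 1) / d ≤ Real.exp (-(1/d)) := by
    have h1 := Real.add_one_le_exp (-(1/(d:ℝ)))
    have h2 : ((d:ℝ) - 1) / d = 1 - 1/d := by field_simp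
    linarith
  have hpow : (((d:ℝ) - 1) / d) ^ n ≤ Real.exp (-(1/d)) ^ n :=
    pow_le_pow_left₀ hbase0 hbase n
  have hexp : Real.exp (-(1/(d:ℝ))) ^ n = Real.exp (-(n/d)) := by
    rw [← Real.exp_nat_mul]
    congr 1
    field_simp
  have hnge : (d : ℝ) * Real.log d + c * d ≤ n := Nat.le_ceil _
  have hmono : Real.exp (-((n:ℝ)/d)) ≤ Real.exp (-(Real.log d + c)) := by
    apply Real.exp_le_exp.mpr
    rw [neg_le_neg_iff, le_div_iff₀ hd']
    linarith [hnge]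
  calc (d:ℝ) * (((d:ℝ) - 1) / d) ^ n
      ≤ (d:ℝ) * Real.exp (-(Real.log d + c)) := by
        apply mul_le_mul_of_nonneg_left _ hd'.le
        exact le_trans hpow (hexp ▸ hmono)
    _ = Real.exp (-c) := by
        rw [neg_add, Real.exp_add, Real.exp_neg, Real.exp_log hd']
        field_simp

lemma lower_est (a : (d : ℕ) → Fin d → ℝ) (ha : ∀ d k, 0 < a d k ∧ a d k < 1)
    (c : ℝ) (hc : 0 ≤ c) (d : ℕ) (hd2 : 2 ≤ d) :
    1 - 1/(1 + Real.exp (c - 1)) ≤ sepCC a d ⌊(d : ℝ) * Real.log d - c * d⌋₊ := by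
  have hd0 : 0 < d := by omega
  have hd' : (0:ℝ) < d := by exact_mod_cast hd0
  have hd2' : (2:ℝ) ≤ d := by exact_mod_cast hd2
  have hE : 0 < 1 + Real.exp (c - 1) := by positivity
  rw [sep_formula a ha d hd0]
  set n := ⌊(d : ℝ) * Real.log d - c * d⌋₊ with hn
  by_cases hn0 : n = 0
  · have : qw d 0 Finset.univ = 0 := by
      have hne : (Finset.univ : Finset (Fin d)) ≠ ∅ :=
        Finset.ne_empty_of_mem (Finset.mem_univ (⟨0, hd0⟩ : Fin d))
      show (if (Finset.univ : Finset (Fin d)) = ∅ then (1:ℝ) else 0) = 0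
      rw [if_neg hne]
    rw [hn0, this]
    have : 0 < 1 / (1 + Real.exp (c - 1)) := by positivity
    linarith
  · have harg : (n : ℝ) ≤ (d : ℝ) * Real.log d - c * d := by
      by_cases h0 : 0 ≤ (d : ℝ) * Real.log d - c * d
      · exact Nat.floor_le h0
      · exfalso
        push_neg at h0
        have : n = 0 := by
          rw [hn]
          exact Nat.floor_of_nonpos h0.le
        exact hn0 this
    refine le_trans ?_ (sep_lower d hd2 n)
    set e1 : ℝ := d * (((d:ℝ) - 1) / d) ^ n with he1
    have he1ge : Real.exp (c - 1) ≤ e1 := by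
      have ht : (0:ℝ) < (d:ℝ) - 1 := by linarith
      have hb : Real.exp (-(1/((d:ℝ)-1))) ≤ ((d:ℝ) - 1)/d := by
        have h1 := Real.add_one_le_exp (1/((d:ℝ)-1))
        have h2 : (d:ℝ)/((d:ℝ)-1) ≤ Real.exp (1/((d:ℝ)-1)) := by
          have : (d:ℝ)/((d:ℝ)-1) = 1/((d:ℝ)-1) + 1 := by field_simp; ring
          linarith
        rw [Real.exp_neg]
        rw [show ((d:ℝ)-1)/d = ((d:ℝ)/((d:ℝ)-1))⁻¹ by rw [inv_div]]
        apply inv_anti₀ (by positivity) h2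
      have hb0 : (0:ℝ) ≤ Real.exp (-(1/((d:ℝ)-1))) := (Real.exp_pos _).le
      have hpow : Real.exp (-(1/((d:ℝ)-1))) ^ n ≤ (((d:ℝ) - 1)/d) ^ n :=
        pow_le_pow_left₀ hb0 hb n
      have hexp : Real.exp (-(1/((d:ℝ)-1))) ^ n = Real.exp (-((n:ℝ)/((d:ℝ)-1))) := by
        rw [← Real.exp_nat_mul]
        congr 1
        field_simp
      have hmono : Real.exp (-(((d:ℝ) * Real.log d - c * d)/((d:ℝ)-1)))
          ≤ Real.exp (-((n:ℝ)/((d:ℝ)-1))) := by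
        apply Real.exp_le_exp.mpr
        rw [neg_le_neg_iff]
        exact div_le_div_of_nonneg_right harg ht.le
      have hlog : Real.log d ≤ (d:ℝ) - 1 := Real.log_le_sub_one_of_pos hd'
      have hYle : (c - 1) + ((d:ℝ) * Real.log d - c * d)/((d:ℝ)-1) ≤ Real.log d := by
        have h2 : ((d:ℝ) * Real.log d - c * d) ≤ (Real.log d - (c-1)) * ((d:ℝ)-1) := by
          nlinarith [hlog, hc, ht]
        have h3 : ((d:ℝ) * Real.log d - c * d)/((d:ℝ)-1) ≤ Real.log d - (c-1) :=
          (div_le_iff₀ ht).mpr h2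
        linarith
      have hfinal : Real.exp (c - 1)
          ≤ (d:ℝ) * Real.exp (-(((d:ℝ) * Real.log d - c * d)/((d:ℝ)-1))) := by
        have hsplit : Real.exp (c-1) = Real.exp (Real.log d) *
            Real.exp ((c - 1) - Real.log d) := by
          rw [← Real.exp_add]
          ring_nf
        rw [hsplit, Real.exp_log hd']
        apply mul_le_mul_of_nonneg_left _ hd'.le
        apply Real.exp_le_exp.mpr
        linarith
      calc Real.exp (c - 1)
          ≤ (d:ℝ) * Real.exp (-(((d:ℝ) * Real.log d - c * d)/((d:ℝ)-1))) := hfinal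
        _ ≤ (d:ℝ) * Real.exp (-((n:ℝ)/((d:ℝ)-1))) :=
            mul_le_mul_of_nonneg_left hmono hd'.le
        _ ≤ e1 := by
            rw [he1]
            apply mul_le_mul_of_nonneg_left _ hd'.le
            rw [← hexp]
            exact hpow
    have he1pos : 0 < e1 := lt_of_lt_of_le (Real.exp_pos _) he1ge
    have step1 : 1 - 1/(1 + Real.exp (c-1)) ≤ 1 - 1/(1 + e1) := by
      have h1 : 1/(1 + e1) ≤ 1/(1 + Real.exp (c-1)) :=
        one_div_le_one_div_of_le hE (by linarith)
      linarith
    have step2 : 1 - 1/(1 + e1) = e1 / (1 + e1) := by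
      field_simp
      ring
    linarith [step1, step2.le]

/-- Separation cutoff at time `d log d` with window size `d` for the classical
coupon collector antidual chains. -/
theorem stmt12 (a : (d : ℕ) → Fin d → ℝ) (ha : ∀ d k, 0 < a d k ∧ a d k < 1) :
    Tendsto (fun c : ℝ =>
        limsup (fun d : ℕ => sepCC a d ⌈(d : ℝ) * Real.log d + c * d⌉₊) atTop)
      atTop (nhds 0) ∧
    Tendsto (fun c : ℝ =>
        liminf (fun d : ℕ => sepCC a d ⌊(d : ℝ) * Real.log d - c * d⌋₊) atTop)
      atTop (nhds 1) := by
  constructor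
  · have hub : ∀ c : ℝ,
        limsup (fun d : ℕ => sepCC a d ⌈(d : ℝ) * Real.log d + c * d⌉₊) atTop
          ≤ Real.exp (-c) := by
      intro c
      apply Filter.limsup_le_of_le
      · apply Filter.isCoboundedUnder_le_of_eventually_le atTop (x := 0)
        filter_upwards [eventually_ge_atTop 1] with d hd
        exact sepCC_nonneg a ha d hd _
      · filter_upwards [eventually_ge_atTop 1] with d hd
        exact upper_est a ha c d hd
    have hlb : ∀ c : ℝ,
        0 ≤ limsup (fun d : ℕ => sepCC a d ⌈(d : ℝ) * Real.log d + c * d⌉₊) atTop := by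
      intro c
      apply Filter.le_limsup_of_le
      · refine ⟨Real.exp (-c), eventually_map.mpr ?_⟩
        filter_upwards [eventually_ge_atTop 1] with d hd
        exact upper_est a ha c d hd
      · intro b hb
        obtain ⟨d, hd1, hd2⟩ := ((eventually_ge_atTop 1).and hb).exists
        exact le_trans (sepCC_nonneg a ha d hd1 _) hd2
    have h1 : Tendsto (fun c : ℝ => Real.exp (-c)) atTop (nhds 0) :=
      Real.tendsto_exp_atBot.comp tendsto_neg_atTop_atBot
    exact tendsto_of_tendsto_of_tendsto_of_le_of_le tendsto_const_nhds h1 hlb hub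
  · have hub : ∀ c : ℝ,
        liminf (fun d : ℕ => sepCC a d ⌊(d : ℝ) * Real.log d - c * d⌋₊) atTop ≤ 1 := by
      intro c
      apply Filter.liminf_le_of_le
      · refine ⟨0, eventually_map.mpr ?_⟩
        filter_upwards [eventually_ge_atTop 1] with d hd
        exact sepCC_nonneg a ha d hd _
      · intro b hb
        obtain ⟨d, hd1, hd2⟩ := ((eventually_ge_atTop 1).and hb).exists
        exact le_trans hd2 (sepCC_le_one a ha d hd1 _)
    have hlb : ∀ c : ℝ, 0 ≤ c →
        1 - 1/(1 + Real.exp (c - 1))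
          ≤ liminf (fun d : ℕ => sepCC a d ⌊(d : ℝ) * Real.log d - c * d⌋₊) atTop := by
      intro c hc
      apply Filter.le_liminf_of_le
      · apply Filter.isCoboundedUnder_ge_of_eventually_le atTop (x := 1)
        filter_upwards [eventually_ge_atTop 1] with d hd
        exact sepCC_le_one a ha d hd _
      · filter_upwards [eventually_ge_atTop 2] with d hd
        exact lower_est a ha c hc d hd
    have hfun : Tendsto (fun c : ℝ => 1 - 1/(1 + Real.exp (c - 1))) atTop (nhds 1) := by
      have h2 : Tendsto (fun c : ℝ => Real.exp (c - 1)) atTop atTop := by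
        apply Real.tendsto_exp_atTop.comp
        exact tendsto_atTop_add_const_right atTop (-1) tendsto_id
      have h3 : Tendsto (fun c : ℝ => 1 + Real.exp (c - 1)) atTop atTop :=
        tendsto_atTop_add_const_left atTop 1 h2
      have h4 : Tendsto (fun c : ℝ => 1/(1 + Real.exp (c - 1))) atTop (nhds 0) := by
        simp only [one_div]
        exact tendsto_inv_atTop_zero.comp h3
      have h5 : Tendsto (fun _ : ℝ => (1:ℝ)) atTop (nhds 1) := tendsto_const_nhds
      have := h5.sub h4
      simpa using this
    refine tendsto_of_tendsto_of_tendsto_of_le_of_le' hfun tendsto_const_nhds ?_ ?_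
    · filter_upwards [eventually_ge_atTop 0] with c hc
      exact hlb c hc
    · exact Eventually.of_forall hub
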